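/- arXiv:0708.1290 — 3 statements merged into one kernel-verified Lean document; each statement's English description precedes it below -/
import Mathlib

section
/- Let π be an ε-almost representation of (Γ,S). Then for every f ∈ C¹: |∑_{(s,s')∈T} ⟨d₂f((s,s')), π(s)f(s⁻¹s')⟩ − (1/3)⟨d₂f, d₂f⟩_{C²}| ≤ (5/3) ε ‖f‖²_{C¹}. -/
open Finset ContinuousLinearMap

def edgeSet {G : Type*} [Group G] [DecidableEq G] (S : Finset G) : Finset (G × G) :=
  (S ×ˢ S).filter fun p => p.1⁻¹ * p.2 ∈ S

def deg {G : Type*} [Group G] [DecidableEq G] (S : Finset G) (s : G) : ℕ :=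
  (S.filter fun s' => s⁻¹ * s' ∈ S).card


def IsAlmostRep {G : Type*} [Group G] {H : Type*} [NormedAddCommGroup H]
    [InnerProductSpace ℂ H] [CompleteSpace H]
    (S : Finset G) (ε : ℝ) (π : G → H →L[ℂ] H) : Prop :=
  (∀ s ∈ S, π s ∈ unitary (H →L[ℂ] H)) ∧
  (∀ s ∈ S, π s⁻¹ = star (π s)) ∧
  ∀ s₁ ∈ S, ∀ s₂ ∈ S, s₁ * s₂ ∈ S → ‖π (s₁ * s₂) - (π s₁).comp (π s₂)‖ ≤ ε

/-- `d₂ f ((s,s')) = f(s) − f(s') + π(s) f(s⁻¹s')`. -/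
def d2 {G : Type*} [Group G] {H : Type*} [NormedAddCommGroup H] [InnerProductSpace ℂ H]
    (π : G → H →L[ℂ] H) (f : G → H) (p : G × G) : H :=
  f p.1 - f p.2 + π p.1 (f (p.1⁻¹ * p.2))

section aux
variable {G : Type*} [Group G] [DecidableEq G]
variable {H : Type*} [NormedAddCommGroup H] [InnerProductSpace ℂ H] [CompleteSpace H]

lemma mem_edgeSet {S : Finset G} {p : G × G} :
    p ∈ edgeSet S ↔ p.1 ∈ S ∧ p.2 ∈ S ∧ p.1⁻¹ * p.2 ∈ S := by
  simp [edgeSet, Finset.mem_filter, Finset.mem_product, and_assoc]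

lemma unit_inner {U : H →L[ℂ] H} (hU : U ∈ unitary (H →L[ℂ] H)) (x y : H) :
    (inner ℂ (U x) (U y) : ℂ) = inner ℂ x y := by
  have h1 : star U * U = 1 := hU.1
  have h2 : (inner ℂ x ((star U * U) y) : ℂ) = inner ℂ (U x) (U y) := by
    rw [ContinuousLinearMap.mul_apply, ContinuousLinearMap.star_eq_adjoint,
      ContinuousLinearMap.adjoint_inner_right]
  rw [← h2, h1, ContinuousLinearMap.one_apply]

lemma sum_edge_sigma {M : Type*} [AddCommMonoid M] (S : Finset G)
    (hsym : ∀ s ∈ S, s⁻¹ ∈ S) (F : G × G → M) :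
    ∑ p ∈ edgeSet S, F p = ∑ p ∈ edgeSet S, F (p.1⁻¹, p.1⁻¹ * p.2) := by
  refine Finset.sum_nbij' (fun p => (p.1⁻¹, p.1⁻¹ * p.2)) (fun p => (p.1⁻¹, p.1⁻¹ * p.2))
    ?_ ?_ ?_ ?_ ?_
  · intro p hp
    obtain ⟨h1, h2, h3⟩ := mem_edgeSet.mp hp
    refine mem_edgeSet.mpr ⟨hsym _ h1, h3, ?_⟩
    simpa [mul_assoc] using h2
  · intro p hp
    obtain ⟨h1, h2, h3⟩ := mem_edgeSet.mp hp
    refine mem_edgeSet.mpr ⟨hsym _ h1, h3, ?_⟩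
    simpa [mul_assoc] using h2
  · intro p _; simp [mul_assoc]
  · intro p _; simp [mul_assoc]
  · intro p _; simp [mul_assoc]

lemma sum_edge_tau {M : Type*} [AddCommMonoid M] (S : Finset G)
    (hsym : ∀ s ∈ S, s⁻¹ ∈ S) (F : G × G → M) :
    ∑ p ∈ edgeSet S, F p = ∑ p ∈ edgeSet S, F (p.2, p.1) := by
  refine Finset.sum_nbij' (fun p => (p.2, p.1)) (fun p => (p.2, p.1)) ?_ ?_ ?_ ?_ ?_
  · intro p hp
    obtain ⟨h1, h2, h3⟩ := mem_edgeSet.mp hp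
    refine mem_edgeSet.mpr ⟨h2, h1, ?_⟩
    simpa [mul_inv_rev] using hsym _ h3
  · intro p hp
    obtain ⟨h1, h2, h3⟩ := mem_edgeSet.mp hp
    refine mem_edgeSet.mpr ⟨h2, h1, ?_⟩
    simpa [mul_inv_rev] using hsym _ h3
  · intro p _; rfl
  · intro p _; rfl
  · intro p _; rfl

lemma sum_edge_snd (S : Finset G) (hsym : ∀ s ∈ S, s⁻¹ ∈ S) (g : G → ℝ) :
    ∑ p ∈ edgeSet S, g p.2 = ∑ s ∈ S, (deg S s : ℝ) * g s := by
  rw [edgeSet, Finset.sum_filter, Finset.sum_product_right]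
  refine Finset.sum_congr rfl fun s' hs' => ?_
  rw [← Finset.sum_filter]
  show ∑ _a ∈ S.filter (fun a => a⁻¹ * s' ∈ S), g s' = (deg S s' : ℝ) * g s'
  rw [Finset.sum_const, nsmul_eq_mul]
  congr 2
  rw [deg]
  congr 1
  apply Finset.filter_congr
  intro x hx
  constructor
  · intro h; simpa [mul_inv_rev] using hsym _ h
  · intro h; simpa [mul_inv_rev] using hsym _ h

end aux

/-- `|∑_{(s,s')∈T} ⟨d₂f((s,s')), π(s)f(s⁻¹s')⟩ − (1/3)⟨d₂f, d₂f⟩_{C²}| ≤ (5/3) ε ‖f‖²_{C¹}`. -/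
theorem stmt8 {G : Type*} [Group G] [DecidableEq G]
    {H : Type*} [NormedAddCommGroup H] [InnerProductSpace ℂ H] [CompleteSpace H]
    (S : Finset G) (hsym : ∀ s ∈ S, s⁻¹ ∈ S) (hone : (1 : G) ∉ S)
    (ε : ℝ) (hε : 0 ≤ ε) (π : G → H →L[ℂ] H) (hπ : IsAlmostRep S ε π)
    (f : G → H) (hf : ∀ s ∈ S, f s⁻¹ = -(π s⁻¹ (f s))) :
    Norm.norm
        (∑ p ∈ edgeSet S, (inner ℂ (d2 π f p) (π p.1 (f (p.1⁻¹ * p.2))) : ℂ)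
          - (1 / 3) * ∑ p ∈ edgeSet S, ((‖d2 π f p‖ : ℂ) ^ 2))
      ≤ (5 / 3) * ε * ∑ s ∈ S, (deg S s : ℝ) * ‖f s‖ ^ 2 := by
  obtain ⟨hun, hstar, hmul⟩ := hπ
  have hu : ∀ s ∈ S, ∀ x y : H, (inner ℂ (π s x) (π s y) : ℂ) = inner ℂ x y :=
    fun s hs x y => unit_inner (hun s hs) x y
  have hcancel : ∀ s ∈ S, ∀ x : H, π s (π s⁻¹ x) = x := by
    intro s hs x
    rw [hstar s hs]
    have h1 : π s * star (π s) = 1 := (hun s hs).2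
    calc π s (star (π s) x) = (π s * star (π s)) x := rfl
      _ = x := by rw [h1, ContinuousLinearMap.one_apply]
  have hipinv : ∀ s ∈ S, ∀ x y : H, (inner ℂ x (π s⁻¹ y) : ℂ) = inner ℂ (π s x) y := by
    intro s hs x y
    rw [← hu s hs x (π s⁻¹ y), hcancel s hs y]
  set T := edgeSet S with hTdef
  set A := ∑ p ∈ T, (inner ℂ (d2 π f p) (π p.1 (f (p.1⁻¹ * p.2))) : ℂ) with hAdef
  set B := ∑ p ∈ T, (inner ℂ (d2 π f p) (f p.2) : ℂ) with hBdef
  set C := ∑ p ∈ T, (inner ℂ (d2 π f p) (f p.1) : ℂ) with hCdef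
  set D := ∑ p ∈ T, ((‖d2 π f p‖ : ℂ) ^ 2) with hDdef
  have hA : A = -B := by
    rw [hAdef, hBdef, ← Finset.sum_neg_distrib, hTdef]
    rw [sum_edge_sigma S hsym (fun p => (inner ℂ (d2 π f p) (π p.1 (f (p.1⁻¹ * p.2))) : ℂ))]
    refine Finset.sum_congr rfl fun p hp => ?_
    obtain ⟨h1, h2, h3⟩ := mem_edgeSet.mp hp
    have h1' : p.1⁻¹ ∈ S := hsym _ h1
    have e1 : (p.1⁻¹)⁻¹ * (p.1⁻¹ * p.2) = p.2 := by group
    have hd : d2 π f (p.1⁻¹, p.1⁻¹ * p.2)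
        = -(π p.1⁻¹ (f p.1)) - f (p.1⁻¹ * p.2) + π p.1⁻¹ (f p.2) := by
      show f p.1⁻¹ - f (p.1⁻¹ * p.2) + π p.1⁻¹ (f ((p.1⁻¹)⁻¹ * (p.1⁻¹ * p.2))) = _
      rw [e1, hf p.1 h1]
    show (inner ℂ (d2 π f (p.1⁻¹, p.1⁻¹ * p.2))
        (π p.1⁻¹ (f ((p.1⁻¹)⁻¹ * (p.1⁻¹ * p.2)))) : ℂ) = -(inner ℂ (d2 π f p) (f p.2))
    rw [e1, hd]
    simp only [d2]
    rw [inner_add_left, inner_sub_left, inner_neg_left,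
      hu p.1⁻¹ h1' (f p.1) (f p.2), hu p.1⁻¹ h1' (f p.2) (f p.2),
      hipinv p.1 h1 (f (p.1⁻¹ * p.2)) (f p.2),
      inner_add_left, inner_sub_left]
    ring
  have hB' : B = -A := by rw [hA, neg_neg]
  have hD : D = C - B + A := by
    rw [hDdef, hCdef, hBdef, hAdef, ← Finset.sum_sub_distrib, ← Finset.sum_add_distrib]
    refine Finset.sum_congr rfl fun p hp => ?_
    have expand : ∀ x : H, (inner ℂ x (d2 π f p) : ℂ)
        = inner ℂ x (f p.1) - inner ℂ x (f p.2) + inner ℂ x (π p.1 (f (p.1⁻¹ * p.2))) := by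
      intro x
      simp only [d2, inner_add_right, inner_sub_right]
    have h0 : (inner ℂ (d2 π f p) (d2 π f p) : ℂ) = (‖d2 π f p‖ : ℂ) ^ 2 := by
      exact_mod_cast inner_self_eq_norm_sq_to_K (𝕜 := ℂ) (d2 π f p)
    rw [← h0, expand]
  have hCt : C = ∑ p ∈ T, (inner ℂ (d2 π f (p.2, p.1)) (f p.2) : ℂ) := by
    rw [hCdef, hTdef]
    exact sum_edge_tau S hsym (fun p => (inner ℂ (d2 π f p) (f p.1) : ℂ))
  have hAC : A - C = -∑ p ∈ T, (inner ℂ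
      ((π p.1 - (π p.2).comp (π (p.1⁻¹ * p.2)⁻¹)) (f (p.1⁻¹ * p.2))) (f p.2) : ℂ) := by
    rw [hA, hCt, hBdef]
    rw [show -(∑ p ∈ T, (inner ℂ (d2 π f p) (f p.2) : ℂ))
        - ∑ p ∈ T, (inner ℂ (d2 π f (p.2, p.1)) (f p.2) : ℂ)
        = -∑ p ∈ T, ((inner ℂ (d2 π f p) (f p.2) : ℂ) + inner ℂ (d2 π f (p.2, p.1)) (f p.2))
      from by rw [Finset.sum_add_distrib]; ring]
    congr 1
    refine Finset.sum_congr rfl fun p hp => ?_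
    obtain ⟨h1, h2, h3⟩ := mem_edgeSet.mp hp
    rw [← inner_add_left]
    congr 1
    show (f p.1 - f p.2 + π p.1 (f (p.1⁻¹ * p.2)))
        + (f p.2 - f p.1 + π p.2 (f (p.2⁻¹ * p.1))) = _
    rw [show p.2⁻¹ * p.1 = (p.1⁻¹ * p.2)⁻¹ from by group, hf _ h3]
    simp only [ContinuousLinearMap.sub_apply, ContinuousLinearMap.comp_apply, map_neg]
    abel
  have hb : ∀ p ∈ T, Norm.norm ((inner ℂ
      ((π p.1 - (π p.2).comp (π (p.1⁻¹ * p.2)⁻¹)) (f (p.1⁻¹ * p.2))) (f p.2) : ℂ))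
      ≤ ε * (‖f (p.1⁻¹ * p.2)‖ * ‖f p.2‖) := by
    intro p hp
    obtain ⟨h1, h2, h3⟩ := mem_edgeSet.mp hp
    have hop : ‖π p.1 - (π p.2).comp (π (p.1⁻¹ * p.2)⁻¹)‖ ≤ ε := by
      have hmem : p.2 * (p.1⁻¹ * p.2)⁻¹ ∈ S := by
        rw [show p.2 * (p.1⁻¹ * p.2)⁻¹ = p.1 from by group]; exact h1
      have := hmul p.2 h2 ((p.1⁻¹ * p.2)⁻¹) (hsym _ h3) hmem
      rwa [show p.2 * (p.1⁻¹ * p.2)⁻¹ = p.1 from by group] at this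
    calc Norm.norm ((inner ℂ
          ((π p.1 - (π p.2).comp (π (p.1⁻¹ * p.2)⁻¹)) (f (p.1⁻¹ * p.2))) (f p.2) : ℂ))
        = ‖(inner ℂ ((π p.1 - (π p.2).comp (π (p.1⁻¹ * p.2)⁻¹)) (f (p.1⁻¹ * p.2)))
            (f p.2) : ℂ)‖ := rfl
      _ ≤ ‖(π p.1 - (π p.2).comp (π (p.1⁻¹ * p.2)⁻¹)) (f (p.1⁻¹ * p.2))‖ * ‖f p.2‖ :=
          norm_inner_le_norm _ _
      _ ≤ (‖π p.1 - (π p.2).comp (π (p.1⁻¹ * p.2)⁻¹)‖ * ‖f (p.1⁻¹ * p.2)‖) * ‖f p.2‖ := by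
          gcongr
          exact ContinuousLinearMap.le_opNorm _ _
      _ ≤ (ε * ‖f (p.1⁻¹ * p.2)‖) * ‖f p.2‖ := by gcongr
      _ = ε * (‖f (p.1⁻¹ * p.2)‖ * ‖f p.2‖) := by ring
  have hcount2 : ∑ p ∈ T, ‖f p.2‖ ^ 2 = ∑ s ∈ S, (deg S s : ℝ) * ‖f s‖ ^ 2 :=
    sum_edge_snd S hsym (fun s => ‖f s‖ ^ 2)
  have hcount3 : ∑ p ∈ T, ‖f (p.1⁻¹ * p.2)‖ ^ 2 = ∑ s ∈ S, (deg S s : ℝ) * ‖f s‖ ^ 2 := by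
    rw [hTdef, ← sum_edge_sigma S hsym (fun p => ‖f p.2‖ ^ 2)]
    exact hcount2
  have habs : Norm.norm (A - C) ≤ ε * ∑ s ∈ S, (deg S s : ℝ) * ‖f s‖ ^ 2 := by
    rw [hAC, norm_neg]
    refine le_trans (norm_sum_le _ _) ?_
    have step : ∑ p ∈ T, Norm.norm ((inner ℂ
        ((π p.1 - (π p.2).comp (π (p.1⁻¹ * p.2)⁻¹)) (f (p.1⁻¹ * p.2))) (f p.2) : ℂ))
        ≤ ∑ p ∈ T, ε * ((‖f (p.1⁻¹ * p.2)‖ ^ 2 + ‖f p.2‖ ^ 2) / 2) := by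
      refine Finset.sum_le_sum fun p hp => le_trans (hb p hp) ?_
      have h2m := two_mul_le_add_sq ‖f (p.1⁻¹ * p.2)‖ ‖f p.2‖
      nlinarith [hε]
    refine le_trans step ?_
    rw [← Finset.mul_sum, ← Finset.sum_div, Finset.sum_add_distrib, hcount2, hcount3]
    apply le_of_eq; ring
  have hE : A - (1 / 3) * D = (1 / 3) * (A - C) := by
    rw [hD, hB']; ring
  have hSig : (0 : ℝ) ≤ ∑ s ∈ S, (deg S s : ℝ) * ‖f s‖ ^ 2 :=
    Finset.sum_nonneg fun s _ => mul_nonneg (Nat.cast_nonneg _) (sq_nonneg _)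
  rw [hE, norm_mul]
  have h13 : Norm.norm (1 / 3 : ℂ) = 1 / 3 := by norm_num
  rw [h13]
  nlinarith [habs, mul_nonneg hε hSig, norm_nonneg (A - C)]
end

section
/- Let λ₁ = λ₁(L(S)) be the smallest nonzero eigenvalue of the graph Laplacian Δ on L(S) (assumed connected). Then for every f ∈ C¹: ⟨Δf, f⟩_{L(S)} ≥ λ₁ ⟨f,f⟩_{C¹} − (λ₁/4) ⟨d₁*f, d₁*f⟩_{C⁰}. -/
open Finset ContinuousLinearMap

/-- The graph `L(S)`: vertices in `S`, with `s ∼ s'` iff `s, s', s⁻¹s' ∈ S` (and `s ≠ s'`). -/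
def lGraph {G : Type*} [Group G] (S : Finset G) : SimpleGraph G where
  Adj s s' := s ∈ S ∧ s' ∈ S ∧ s⁻¹ * s' ∈ S ∧ s'⁻¹ * s ∈ S ∧ s ≠ s'
  symm := ⟨fun a b h => ⟨h.2.1, h.1, h.2.2.2.1, h.2.2.1, h.2.2.2.2.symm⟩⟩
  loopless := ⟨fun a h => h.2.2.2.2 rfl⟩

/-- `μ` is an eigenvalue of the discrete Laplacian
`Δf(s) = f(s) − (1/deg s) ∑_{s'∼s} f(s')` of the graph `L(S)`. -/
def IsLapEig {G : Type*} [Group G] [DecidableEq G] (S : Finset G) (μ : ℝ) : Prop :=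
  ∃ g : G → ℝ, (∃ s ∈ S, g s ≠ 0) ∧ ∀ s ∈ S,
    g s - ((deg S s : ℝ))⁻¹ * ∑ s' ∈ S.filter (fun t => s⁻¹ * t ∈ S), g s' = μ * g s

/-- `d₁* f = −2 ∑_{s∈S} f(s) n(s)/|T|`. -/
noncomputable def d1star {G : Type*} [Group G] [DecidableEq G]
    {H : Type*} [NormedAddCommGroup H] [InnerProductSpace ℂ H]
    (S : Finset G) (f : G → H) : H :=
  (-(2 / ((edgeSet S).card : ℂ))) • ∑ s ∈ S, (deg S s : ℂ) • f s

/-!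
With `φ(s) = √(deg s) • f(s)`, the left-hand side is the vector-valued quadratic form
`∑ N s t * re ⟪φ s, φ t⟫` of the symmetric normalised Laplacian `N = D^{-1/2} (D - A) D^{-1/2}`,
which is conjugate to `Δ`. Expanding `φ` along an orthonormal eigenbasis of `N` writes it as
`∑ μᵢ ‖vᵢ‖²` with `∑ ‖vᵢ‖² = ∑ deg s * ‖f s‖²`. By connectedness the kernel of `N` is spanned
by `√deg`, and the corresponding components carry exactly `‖∑ deg s • f s‖² / |T|`, which is
`|T| ‖d₁* f‖² / 4`; every other `μᵢ` is a nonzero eigenvalue of `Δ`, hence at least `λ₁`.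
-/

open scoped InnerProductSpace

section
variable {𝕜 : Type*} [RCLike 𝕜] {E : Type*} [NormedAddCommGroup E] [InnerProductSpace 𝕜 E]
  {ι κ : Type*} [Fintype ι] [Fintype κ]

lemma re_inner_ofReal_smul_ofReal_smul (r r' : ℝ) (x y : E) :
    RCLike.re ⟪(r : 𝕜) • x, (r' : 𝕜) • y⟫_𝕜 = r * r' * RCLike.re ⟪x, y⟫_𝕜 := by
  rw [inner_smul_left, inner_smul_right, RCLike.conj_ofReal, ← mul_assoc, ← RCLike.ofReal_mul,
    RCLike.re_ofReal_mul]

lemma norm_sum_ofReal_smul_sq (x : ι → ℝ) (φ : ι → E) :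
    ‖∑ s, (x s : 𝕜) • φ s‖ ^ 2 = ∑ s, ∑ t, x s * x t * RCLike.re ⟪φ s, φ t⟫_𝕜 := by
  rw [@norm_sq_eq_re_inner 𝕜, sum_inner, map_sum]
  refine sum_congr rfl fun s _ => ?_
  rw [inner_sum, map_sum]
  exact sum_congr rfl fun t _ => re_inner_ofReal_smul_ofReal_smul _ _ _ _

lemma sum_mul_norm_sum_smul_sq (c : κ → ℝ) (b : κ → ι → ℝ) (φ : ι → E) :
    ∑ i, c i * ‖∑ s, (b i s : 𝕜) • φ s‖ ^ 2 =
      ∑ s, ∑ t, (∑ i, c i * (b i s * b i t)) * RCLike.re ⟪φ s, φ t⟫_𝕜 := by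
  simp_rw [norm_sum_ofReal_smul_sq, mul_sum, sum_mul]
  rw [sum_comm]
  refine sum_congr rfl fun s _ => ?_
  rw [sum_comm]
  simp only [mul_assoc]
end

namespace Matrix.IsHermitian
variable {ι : Type*} [Fintype ι] [DecidableEq ι] {A : Matrix ι ι ℝ}

lemma sum_eigenvectorBasis_mul (hA : A.IsHermitian) (s t : ι) :
    ∑ i, hA.eigenvectorBasis i s * hA.eigenvectorBasis i t = (1 : Matrix ι ι ℝ) s t := by
  have := congrFun (congrFun (Matrix.mem_unitaryGroup_iff.mp hA.eigenvectorUnitary.2) s) t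
  simpa [Matrix.mul_apply] using this

lemma sum_eigenvalues_mul_eigenvectorBasis (hA : A.IsHermitian) (s t : ι) :
    ∑ i, hA.eigenvalues i * (hA.eigenvectorBasis i s * hA.eigenvectorBasis i t) = A s t := by
  conv_rhs => rw [hA.spectral_theorem]
  simp only [diagonal, RCLike.ofReal_real_eq_id, Function.comp_apply, id_eq,
    Unitary.conjStarAlgAut_apply, mul_apply, eigenvectorUnitary_apply, of_apply, mul_ite, mul_zero,
    sum_ite_eq', mem_univ, ↓reduceIte, star_apply, star_trivial]
  exact sum_congr rfl fun _ _ => by ring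

variable {𝕜 : Type*} [RCLike 𝕜] {E : Type*} [NormedAddCommGroup E] [InnerProductSpace 𝕜 E]

lemma sum_norm_sum_eigenvectorBasis_smul_sq (hA : A.IsHermitian) (φ : ι → E) :
    ∑ i, ‖∑ s, (hA.eigenvectorBasis i s : 𝕜) • φ s‖ ^ 2 = ∑ s, ‖φ s‖ ^ 2 := by
  simpa [sum_eigenvectorBasis_mul, Matrix.one_apply, ← @norm_sq_eq_re_inner 𝕜] using
    sum_mul_norm_sum_smul_sq (𝕜 := 𝕜) 1 (fun i => ⇑(hA.eigenvectorBasis i)) φ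

lemma sum_eigenvalues_mul_norm_sum_eigenvectorBasis_smul_sq (hA : A.IsHermitian) (φ : ι → E) :
    ∑ i, hA.eigenvalues i * ‖∑ s, (hA.eigenvectorBasis i s : 𝕜) • φ s‖ ^ 2 =
      ∑ s, ∑ t, A s t * RCLike.re ⟪φ s, φ t⟫_𝕜 := by
  simp only [sum_mul_norm_sum_smul_sq, sum_eigenvalues_mul_eigenvectorBasis]

lemma sum_dotProduct_eigenvectorBasis_sq (hA : A.IsHermitian) (u : ι → ℝ) :
    ∑ i, (u ⬝ᵥ hA.eigenvectorBasis i) ^ 2 = u ⬝ᵥ u := by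
  simpa [sum_eigenvectorBasis_mul, Matrix.one_apply, dotProduct, mul_comm] using
    sum_mul_norm_sum_smul_sq (𝕜 := ℝ) 1 (fun i => ⇑(hA.eigenvectorBasis i)) u

lemma dotProduct_eigenvectorBasis_eq_zero (hA : A.IsHermitian) {u : ι → ℝ} (hu : A *ᵥ u = 0)
    {i : ι} (hi : hA.eigenvalues i ≠ 0) : u ⬝ᵥ hA.eigenvectorBasis i = 0 := by
  have hAt : Aᵀ = A := by simpa [conjTranspose_eq_transpose_of_trivial] using hA.eq
  have hvec : u ᵥ* A = 0 := by rw [← hAt, vecMul_transpose, hu]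
  have : hA.eigenvalues i * (u ⬝ᵥ hA.eigenvectorBasis i) = 0 := by
    rw [← smul_eq_mul, ← dotProduct_smul, ← mulVec_eigenvectorBasis, dotProduct_mulVec, hvec,
      zero_dotProduct]
  exact (mul_eq_zero.mp this).resolve_left hi

theorem poincare_of_ker_eq_span (hA : A.IsHermitian) {u : ι → ℝ} (hu : A *ᵥ u = 0)
    (hker : ∀ x, A *ᵥ x = 0 → ∃ c : ℝ, x = c • u) {lam : ℝ}
    (hlam : ∀ (μ : ℝ) (x : ι → ℝ), x ≠ 0 → A *ᵥ x = μ • x → μ ≠ 0 → lam ≤ μ) (φ : ι → E) :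
    lam * (∑ s, ‖φ s‖ ^ 2 - ‖∑ s, (u s : 𝕜) • φ s‖ ^ 2 / (u ⬝ᵥ u)) ≤
      ∑ s, ∑ t, A s t * RCLike.re ⟪φ s, φ t⟫_𝕜 := by
  let V : (ι → ℝ) → E := fun x => ∑ s, (x s : 𝕜) • φ s
  have hVsmul (c : ℝ) (x : ι → ℝ) : V (c • x) = (c : 𝕜) • V x := by
    simp only [V, smul_sum, Pi.smul_apply, smul_eq_mul, RCLike.ofReal_mul, mul_smul]
  -- `p i` is the share of `‖V u‖² / ‖u‖²` carried by `b i`: all of `‖V (b i)‖²` when `b i` lies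
  -- in `ker A = ℝ u`, and nothing otherwise, since then `b i ⟂ u`.
  let p : ι → ℝ := fun i =>
    (u ⬝ᵥ hA.eigenvectorBasis i) ^ 2 / (u ⬝ᵥ u) * (‖V u‖ ^ 2 / (u ⬝ᵥ u))
  have hterm (i : ι) : lam * (‖V (hA.eigenvectorBasis i)‖ ^ 2 - p i) ≤
      hA.eigenvalues i * ‖V (hA.eigenvectorBasis i)‖ ^ 2 := by
    by_cases hi : hA.eigenvalues i = 0
    · obtain ⟨c, hc⟩ := hker (hA.eigenvectorBasis i)
        (by rw [hA.mulVec_eigenvectorBasis, hi, zero_smul])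
      have : ‖V (hA.eigenvectorBasis i)‖ ^ 2 = p i := by
        rcases eq_or_ne (u ⬝ᵥ u) 0 with h0 | h0
        · simp [p, hc, V, dotProduct_self_eq_zero.mp h0]
        · simp only [p, hc, hVsmul, norm_smul, RCLike.norm_ofReal, dotProduct_smul, smul_eq_mul]
          field_simp
          rw [sq_abs, mul_comm]
      rw [this, hi]; simp
    · have : p i = 0 := by simp [p, dotProduct_eigenvectorBasis_eq_zero hA hu hi]
      rw [this, sub_zero]
      refine mul_le_mul_of_nonneg_right (hlam _ _ ?_ (hA.mulVec_eigenvectorBasis i) hi)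
        (sq_nonneg _)
      exact fun h => hA.eigenvectorBasis.orthonormal.ne_zero i
        (by simpa using congrArg (WithLp.toLp 2) h)
  have hsum_p : ∑ i, p i = ‖V u‖ ^ 2 / (u ⬝ᵥ u) := by
    rw [← sum_mul, ← sum_div, sum_dotProduct_eigenvectorBasis_sq hA]
    rcases eq_or_ne (u ⬝ᵥ u) 0 with h0 | h0
    · simp [h0]
    · rw [div_self h0, one_mul]
  calc lam * (∑ s, ‖φ s‖ ^ 2 - ‖V u‖ ^ 2 / (u ⬝ᵥ u))
      = ∑ i, lam * (‖V (hA.eigenvectorBasis i)‖ ^ 2 - p i) := by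
        rw [← sum_norm_sum_eigenvectorBasis_smul_sq (𝕜 := 𝕜) hA, ← hsum_p, ← mul_sum,
          sum_sub_distrib]
    _ ≤ ∑ i, hA.eigenvalues i * ‖V (hA.eigenvectorBasis i)‖ ^ 2 :=
        sum_le_sum fun i _ => hterm i
    _ = _ := sum_eigenvalues_mul_norm_sum_eigenvectorBasis_smul_sq hA φ

end Matrix.IsHermitian

section LGraph
open Matrix
variable {G : Type*} [Group G] {S : Finset G}

lemma inv_mul_mem_comm (hsym : ∀ s ∈ S, s⁻¹ ∈ S) {s t : G} : s⁻¹ * t ∈ S ↔ t⁻¹ * s ∈ S :=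
  ⟨fun h => by simpa using hsym _ h, fun h => by simpa using hsym _ h⟩

lemma lGraph_reachable_eq {g : G → ℝ} (h : ∀ s t, (lGraph S).Adj s t → g s = g t) {s t : G}
    (hst : (lGraph S).Reachable s t) : g s = g t := by
  obtain ⟨w⟩ := hst
  induction w with
  | nil => rfl
  | cons hadj _ ih => exact (h _ _ hadj).trans ih

variable [DecidableEq G]

lemma eq_of_deg_eq_zero (hconn : ∀ s ∈ S, ∀ s' ∈ S, (lGraph S).Reachable s s') {s₀ s : G}
    (hs₀ : s₀ ∈ S) (h0 : deg S s₀ = 0) (hs : s ∈ S) : s = s₀ := by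
  obtain ⟨w⟩ := hconn s₀ hs₀ s hs
  cases w with
  | nil => rfl
  | cons hadj _ =>
    exact absurd (card_eq_zero.mp h0) (ne_empty_of_mem (mem_filter.mpr ⟨hadj.2.1, hadj.2.2.1⟩))

lemma sqrt_deg_ne_zero (hdeg : ∀ s ∈ S, 0 < deg S s) (s : S) : √(deg S s) ≠ 0 := by
  simpa using (hdeg s s.2).ne'

lemma card_edgeSet (S : Finset G) : (edgeSet S).card = ∑ s ∈ S, deg S s := by
  rw [edgeSet, card_filter, sum_product]
  exact sum_congr rfl fun s _ => by rw [deg, card_filter]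

noncomputable def lap (S : Finset G) (g : G → ℝ) (s : G) : ℝ :=
  g s - (deg S s : ℝ)⁻¹ * ∑ t ∈ S.filter (fun t => s⁻¹ * t ∈ S), g t

lemma sum_sub_eq_zero_of_lap_eq_zero {g : G → ℝ} {s : G} (hs : 0 < deg S s)
    (h : lap S g s = 0) : ∑ t ∈ S.filter (fun t => s⁻¹ * t ∈ S), (g s - g t) = 0 := by
  have hd : (deg S s : ℝ) ≠ 0 := by exact_mod_cast hs.ne'
  rw [sum_sub_distrib, sum_const, nsmul_eq_mul, ← deg]
  rw [lap, sub_eq_zero] at h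
  rw [h]
  field_simp
  ring

lemma sum_sum_sub_sq_eq (hsym : ∀ s ∈ S, s⁻¹ ∈ S) (g : G → ℝ) :
    ∑ s ∈ S, ∑ t ∈ S.filter (fun t => s⁻¹ * t ∈ S), (g s - g t) ^ 2 =
      2 * ∑ s ∈ S, g s * ∑ t ∈ S.filter (fun t => s⁻¹ * t ∈ S), (g s - g t) := by
  have hswap : ∑ s ∈ S, ∑ t ∈ S.filter (fun t => s⁻¹ * t ∈ S), g t * (g t - g s) =
      ∑ s ∈ S, ∑ t ∈ S.filter (fun t => s⁻¹ * t ∈ S), g s * (g s - g t) := by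
    refine sum_comm' fun s t => ?_
    simp only [mem_filter]
    rw [inv_mul_mem_comm hsym]
    tauto
  calc _ = ∑ s ∈ S, ∑ t ∈ S.filter (fun t => s⁻¹ * t ∈ S),
          (g s * (g s - g t) + g t * (g t - g s)) :=
        sum_congr rfl fun s _ => sum_congr rfl fun t _ => by ring
    _ = 2 * ∑ s ∈ S, ∑ t ∈ S.filter (fun t => s⁻¹ * t ∈ S), g s * (g s - g t) := by
        simp only [sum_add_distrib, hswap]; ring
    _ = _ := by simp only [mul_sum]

lemma eq_of_lap_eq_zero (hsym : ∀ s ∈ S, s⁻¹ ∈ S)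
    (hconn : ∀ s ∈ S, ∀ s' ∈ S, (lGraph S).Reachable s s') (hdeg : ∀ s ∈ S, 0 < deg S s)
    {g : G → ℝ} (h : ∀ s ∈ S, lap S g s = 0) {s t : G} (hs : s ∈ S) (ht : t ∈ S) :
    g s = g t := by
  have hzero : ∑ s ∈ S, ∑ t ∈ S.filter (fun t => s⁻¹ * t ∈ S), (g s - g t) ^ 2 = 0 := by
    rw [sum_sum_sub_sq_eq hsym, sum_eq_zero fun s hs => by
      rw [sum_sub_eq_zero_of_lap_eq_zero (hdeg s hs) (h s hs), mul_zero], mul_zero]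
  refine lGraph_reachable_eq (fun a b hab => ?_) (hconn s hs t ht)
  obtain ⟨ha, hb, hab, -⟩ := hab
  have := (sum_eq_zero_iff_of_nonneg fun _ _ => sum_nonneg fun _ _ => sq_nonneg _).mp hzero a ha
  have := (sum_eq_zero_iff_of_nonneg fun _ _ => sq_nonneg _).mp this b (mem_filter.mpr ⟨hb, hab⟩)
  exact sub_eq_zero.mp (pow_eq_zero_iff two_ne_zero |>.mp this)

/-- `D^{-1/2} (D - A) D^{-1/2}`, the symmetric conjugate `D^{1/2} Δ D^{-1/2}` of `lap`; here
`denormalize S x` is `D^{-1/2} x`, extended by zero off `S`. -/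
noncomputable def normLapMatrix (S : Finset G) : Matrix S S ℝ :=
  (1 : Matrix S S ℝ) -
    of fun s t : S => (if (s : G)⁻¹ * t ∈ S then 1 else 0) / (√(deg S s) * √(deg S t))

noncomputable def denormalize (S : Finset G) (x : S → ℝ) (t : G) : ℝ :=
  if h : t ∈ S then x ⟨t, h⟩ / √(deg S t) else 0

lemma normLapMatrix_isHermitian (hsym : ∀ s ∈ S, s⁻¹ ∈ S) : (normLapMatrix S).IsHermitian := by
  ext s t
  simp only [normLapMatrix, conjTranspose_apply, star_trivial, Matrix.sub_apply, one_apply,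
    of_apply, inv_mul_mem_comm hsym (s := (t : G)), mul_comm (√(deg S t)), eq_comm]

lemma normLapMatrix_mulVec_apply (hdeg : ∀ s ∈ S, 0 < deg S s) (x : S → ℝ) (s : S) :
    (normLapMatrix S *ᵥ x) s = √(deg S s) * lap S (denormalize S x) s := by
  have hsum : ∑ t ∈ S.filter (fun t => (s : G)⁻¹ * t ∈ S), denormalize S x t =
      ∑ t : S, (if (s : G)⁻¹ * t ∈ S then 1 else 0) * (x t / √(deg S t)) := by
    rw [sum_filter, ← sum_coe_sort S]
    simp [denormalize]
  rw [lap, hsum, denormalize, dif_pos s.2, normLapMatrix, sub_mulVec, one_mulVec, Pi.sub_apply,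
    mulVec, dotProduct, mul_sub, mul_div_cancel₀ _ (sqrt_deg_ne_zero hdeg s), mul_sum, mul_sum]
  congr 1
  refine sum_congr rfl fun t _ => ?_
  have hinv : (deg S s : ℝ)⁻¹ = (√(deg S s))⁻¹ * (√(deg S s))⁻¹ := by
    rw [← mul_inv, Real.mul_self_sqrt (Nat.cast_nonneg _)]
  rw [of_apply, hinv]
  field_simp

lemma isLapEig_of_mulVec_eq_smul (hdeg : ∀ s ∈ S, 0 < deg S s) {μ : ℝ} {x : S → ℝ} (hx : x ≠ 0)
    (h : normLapMatrix S *ᵥ x = μ • x) : IsLapEig S μ := by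
  refine ⟨denormalize S x, ?_, fun s hs => ?_⟩
  · obtain ⟨t, ht⟩ := Function.ne_iff.mp hx
    exact ⟨t, t.2, by simpa [denormalize] using ⟨ht, (hdeg t t.2).ne'⟩⟩
  · have := congrFun h ⟨s, hs⟩
    rw [normLapMatrix_mulVec_apply hdeg, Pi.smul_apply, smul_eq_mul] at this
    change lap S (denormalize S x) s = _
    rw [denormalize, dif_pos hs, mul_div_assoc', eq_div_iff (sqrt_deg_ne_zero hdeg ⟨s, hs⟩), ← this,
      mul_comm]

lemma normLapMatrix_mulVec_sqrt_deg (hdeg : ∀ s ∈ S, 0 < deg S s) :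
    normLapMatrix S *ᵥ (fun s : S => √(deg S s)) = 0 := by
  funext s
  have hone : ∀ t ∈ S.filter (fun t => (s : G)⁻¹ * t ∈ S),
      denormalize S (fun s : S => √(deg S s)) t = 1 := fun t ht => by
    rw [denormalize, dif_pos (mem_filter.mp ht).1, div_self (sqrt_deg_ne_zero hdeg ⟨t, _⟩)]
  have hdS : (deg S s : ℝ) ≠ 0 := by exact_mod_cast (hdeg s s.2).ne'
  rw [normLapMatrix_mulVec_apply hdeg, lap, sum_congr rfl hone, sum_const, nsmul_one, ← deg,
    denormalize, dif_pos s.2, div_self (sqrt_deg_ne_zero hdeg s), inv_mul_cancel₀ hdS, sub_self,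
    mul_zero, Pi.zero_apply]

lemma eq_smul_sqrt_deg_of_normLapMatrix_mulVec_eq_zero (hsym : ∀ s ∈ S, s⁻¹ ∈ S)
    (hconn : ∀ s ∈ S, ∀ s' ∈ S, (lGraph S).Reachable s s') (hdeg : ∀ s ∈ S, 0 < deg S s)
    {x : S → ℝ} (h : normLapMatrix S *ᵥ x = 0) : ∃ c : ℝ, x = c • fun s : S => √(deg S s) := by
  have hlap : ∀ s ∈ S, lap S (denormalize S x) s = 0 := fun s hs => by
    simpa [normLapMatrix_mulVec_apply hdeg, sqrt_deg_ne_zero hdeg ⟨s, hs⟩] using congrFun h ⟨s, hs⟩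
  rcases isEmpty_or_nonempty S with hS | hS
  · exact ⟨0, Subsingleton.elim _ _⟩
  obtain ⟨s₀⟩ := hS
  refine ⟨denormalize S x s₀, funext fun s => ?_⟩
  rw [Pi.smul_apply, smul_eq_mul, ← eq_of_lap_eq_zero hsym hconn hdeg hlap s.2 s₀.2,
    denormalize, dif_pos s.2, div_mul_cancel₀ _ (sqrt_deg_ne_zero hdeg s)]

variable {𝕜 : Type*} [RCLike 𝕜] {E : Type*} [NormedAddCommGroup E] [InnerProductSpace 𝕜 E]

lemma sum_normLapMatrix_mul_re_inner (hdeg : ∀ s ∈ S, 0 < deg S s) (f : G → E) :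
    ∑ s : S, ∑ t : S, normLapMatrix S s t *
        RCLike.re ⟪(√(deg S s) : 𝕜) • f s, (√(deg S t) : 𝕜) • f t⟫_𝕜 =
      ∑ s ∈ S, (deg S s : ℝ) * RCLike.re
        ⟪f s - (deg S s : 𝕜)⁻¹ • ∑ t ∈ S.filter (fun t => s⁻¹ * t ∈ S), f t, f s⟫_𝕜 := by
  rw [← sum_coe_sort S]
  refine sum_congr rfl fun s _ => ?_
  have hdS : (deg S s : ℝ) ≠ 0 := by exact_mod_cast (hdeg s s.2).ne'
  simp only [normLapMatrix, Matrix.sub_apply, one_apply, of_apply, sub_mul, sum_sub_distrib,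
    ite_mul, one_mul, zero_mul, sum_ite_eq, mem_univ, if_true, re_inner_ofReal_smul_ofReal_smul]
  have hconj : (starRingEnd 𝕜) (deg S s : 𝕜)⁻¹ = (((deg S s : ℝ)⁻¹ : ℝ) : 𝕜) := by simp
  rw [inner_sub_left, inner_smul_left, map_sub, hconj, RCLike.re_ofReal_mul, sum_inner, map_sum,
    sum_filter, ← sum_coe_sort S, Real.mul_self_sqrt (Nat.cast_nonneg _), mul_sub,
    mul_inv_cancel_left₀ hdS]
  congr 1
  refine sum_congr rfl fun t _ => ?_
  rw [inner_re_symm]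
  split_ifs
  · field_simp [sqrt_deg_ne_zero hdeg s, sqrt_deg_ne_zero hdeg t]
  · rw [zero_div, zero_mul]

lemma sum_norm_sqrt_deg_smul_sq (f : G → E) :
    ∑ s : S, ‖(√(deg S s) : 𝕜) • f s‖ ^ 2 = ∑ s ∈ S, (deg S s : ℝ) * ‖f s‖ ^ 2 := by
  rw [← sum_coe_sort S]
  refine sum_congr rfl fun s _ => ?_
  rw [norm_smul, mul_pow, RCLike.norm_ofReal, sq_abs, Real.sq_sqrt (Nat.cast_nonneg _)]

lemma sum_sqrt_deg_smul_sqrt_deg_smul (f : G → E) :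
    ∑ s : S, (√(deg S s) : 𝕜) • (√(deg S s) : 𝕜) • f s = ∑ s ∈ S, (deg S s : 𝕜) • f s := by
  rw [← sum_coe_sort S]
  refine sum_congr rfl fun s _ => ?_
  rw [smul_smul, ← RCLike.ofReal_mul, Real.mul_self_sqrt (Nat.cast_nonneg _),
    RCLike.ofReal_natCast]

lemma sqrt_deg_dotProduct_sqrt_deg :
    (fun s : S => √(deg S s)) ⬝ᵥ (fun s : S => √(deg S s)) = (edgeSet S).card := by
  rw [dotProduct, card_edgeSet, Nat.cast_sum, ← sum_coe_sort S]
  exact sum_congr rfl fun s _ => Real.mul_self_sqrt (Nat.cast_nonneg _)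

lemma card_edgeSet_mul_norm_d1star_sq {H : Type*} [NormedAddCommGroup H] [InnerProductSpace ℂ H]
    (f : G → H) : ((edgeSet S).card : ℝ) * ‖d1star S f‖ ^ 2 =
      4 * (‖∑ s ∈ S, (deg S s : ℂ) • f s‖ ^ 2 / (edgeSet S).card) := by
  rcases eq_or_ne ((edgeSet S).card : ℝ) 0 with h | h
  · simp [h]
  · rw [d1star, norm_smul, norm_neg, norm_div, Complex.norm_natCast, Complex.norm_ofNat]
    field_simp
    ring

end LGraph

theorem stmt11_general {G : Type*} [Group G] [DecidableEq G]
    {H : Type*} [NormedAddCommGroup H] [InnerProductSpace ℂ H]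
    (S : Finset G) (hsym : ∀ s ∈ S, s⁻¹ ∈ S)
    (hconn : ∀ s ∈ S, ∀ s' ∈ S, (lGraph S).Reachable s s')
    (lam1 : ℝ)
    (hlam1min : ∀ μ : ℝ, IsLapEig S μ → μ ≠ 0 → lam1 ≤ μ)
    (f : G → H) :
    (∑ s ∈ S, (deg S s : ℝ) *
        (inner ℂ (f s - ((deg S s : ℂ))⁻¹ • ∑ s' ∈ S.filter (fun t => s⁻¹ * t ∈ S), f s')
          (f s) : ℂ).re)
      ≥ lam1 * (∑ s ∈ S, (deg S s : ℝ) * ‖f s‖ ^ 2)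
        - (lam1 / 4) * (((edgeSet S).card : ℝ) * ‖d1star S f‖ ^ 2) := by
  by_cases hdeg : ∀ s ∈ S, 0 < deg S s
  · have key := (normLapMatrix_isHermitian hsym).poincare_of_ker_eq_span (𝕜 := ℂ)
      (normLapMatrix_mulVec_sqrt_deg hdeg)
      (fun x hx => eq_smul_sqrt_deg_of_normLapMatrix_mulVec_eq_zero hsym hconn hdeg hx)
      (fun μ x hx h hμ => hlam1min μ (isLapEig_of_mulVec_eq_smul hdeg hx h) hμ)
      -- the `RCLike` coercion rather than `Complex.ofReal`, to match the lemmas stated over `𝕜`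
      (fun s : S => (RCLike.ofReal (√(deg S s)) : ℂ) • f s)
    rw [sum_normLapMatrix_mul_re_inner hdeg, sum_norm_sqrt_deg_smul_sq,
      sum_sqrt_deg_smul_sqrt_deg_smul, sqrt_deg_dotProduct_sqrt_deg] at key
    rw [card_edgeSet_mul_norm_d1star_sq]
    simp only [RCLike.re_to_complex] at key
    linarith
  · obtain ⟨s₀, hs₀, h0⟩ : ∃ s₀ ∈ S, deg S s₀ = 0 := by simpa using hdeg
    have hall : ∀ s ∈ S, deg S s = 0 := fun s hs => by rwa [eq_of_deg_eq_zero hconn hs₀ h0 hs]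
    rw [sum_eq_zero fun s hs => by rw [hall s hs, Nat.cast_zero, zero_mul],
      sum_eq_zero fun s hs => by rw [hall s hs, Nat.cast_zero, zero_mul], card_edgeSet,
      sum_eq_zero hall]
    simp

/-- Żuk's spectral-gap estimate: if `λ₁ = λ₁(L(S))` is the smallest nonzero eigenvalue of
the Laplacian of the connected graph `L(S)`, then for every `f ∈ C¹`,
`⟨Δf, f⟩_{L(S)} ≥ λ₁ ⟨f,f⟩_{C¹} − (λ₁/4) ⟨d₁*f, d₁*f⟩_{C⁰}`. -/
theorem stmt11 {G : Type*} [Group G] [DecidableEq G]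
    {H : Type*} [NormedAddCommGroup H] [InnerProductSpace ℂ H] [CompleteSpace H]
    (S : Finset G) (hsym : ∀ s ∈ S, s⁻¹ ∈ S) (hone : (1 : G) ∉ S)
    (hconn : ∀ s ∈ S, ∀ s' ∈ S, (lGraph S).Reachable s s')
    (lam1 : ℝ) (hlam1 : IsLapEig S lam1) (hlam1ne : lam1 ≠ 0)
    (hlam1min : ∀ μ : ℝ, IsLapEig S μ → μ ≠ 0 → lam1 ≤ μ)
    (π : G → H →L[ℂ] H) (hunit : ∀ s ∈ S, π s ∈ unitary (H →L[ℂ] H))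
    (hstar : ∀ s ∈ S, π s⁻¹ = star (π s))
    (f : G → H) (hf : ∀ s ∈ S, f s⁻¹ = -(π s⁻¹ (f s))) :
    (∑ s ∈ S, (deg S s : ℝ) *
        (inner ℂ (f s - ((deg S s : ℂ))⁻¹ • ∑ s' ∈ S.filter (fun t => s⁻¹ * t ∈ S), f s')
          (f s) : ℂ).re)
      ≥ lam1 * (∑ s ∈ S, (deg S s : ℝ) * ‖f s‖ ^ 2)
        - (lam1 / 4) * (((edgeSet S).card : ℝ) * ‖d1star S f‖ ^ 2) :=
  stmt11_general S hsym hconn lam1 hlam1min f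
end

section
/- Let π: S → U(H) be an ε-almost representation, A = (1/|S|)∑_{s∈S}π(s), and let H₀ ⊂ H be the range of a spectral projection of A such that ‖π(s)ξ − ξ‖ ≤ α‖ξ‖ for all s ∈ S and ξ ∈ H₀. Writing π(s) as a 2×2 block matrix (A B; C D) with respect to H = H₀ ⊕ H₀⊥, one has ‖B‖ ≤ |S|α and ‖C‖ ≤ |S|α, and there exists a unitary D' on H₀⊥ with ‖D' − D‖ ≤ 2|S|α; setting π'(s) = (1 0; 0 D') yields ‖π'(s) − π(s)‖ ≤ 3|S|α and π' is an (ε + 6|S|α)-almost representation. -/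
open Finset ContinuousLinearMap

/-!
Write `P` for the orthogonal projection onto `K` and `D = (1 - P) T (1 - P)` for the compression
of `T = π s` to `Kᗮ`. Almost invariance of `K` under `T` and under `T⋆ = π s⁻¹` bounds both
off-diagonal blocks of `T` by `α`. As `T` is unitary, `1 - D⋆D` is `B⋆B` for the upper right
block `B`, so `‖1 - D⋆D‖ ≤ α²`, and likewise `‖1 - DD⋆‖ ≤ α²`. For `α < 1` this makes `D`
invertible, and its polar part `D' = D |D|⁻¹` is a unitary with
`‖D' - D‖ ≤ ‖1 - |D|‖ ≤ ‖1 - D⋆D‖ ≤ α²`. Taking polar parts commutes with adjoints, so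
`π' s = 1 ⊕ D'` is again an almost representation: its defect is that of `s ↦ D'`, which exceeds
the defect of `π` by at most `α²` from the off-diagonal blocks plus `3α²` from replacing `D`
by `D'`. For `α ≥ 1` the constant map `π' = 1` satisfies all the bounds.
-/

open CFC

section Units

variable {R : Type*} [NormedRing R] [HasSummableGeomSeries R]

lemma isUnit_of_norm_one_sub_lt {x : R} (h : ‖1 - x‖ < 1) : IsUnit x :=
  sub_sub_self 1 x ▸ (Units.oneSub (1 - x) h).isUnit

lemma isUnit_of_norm_one_sub_star_mul_self_lt [StarRing R] {d : R} (h₁ : ‖1 - star d * d‖ < 1)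
    (h₂ : ‖1 - d * star d‖ < 1) : IsUnit d := by
  obtain ⟨l, hl⟩ := (isUnit_of_norm_one_sub_lt h₁).exists_left_inv
  obtain ⟨r, hr⟩ := (isUnit_of_norm_one_sub_lt h₂).exists_right_inv
  exact isUnit_iff_exists_and_exists.2 ⟨⟨star d * r, by rw [← mul_assoc, hr]⟩,
    ⟨l * star d, by rw [mul_assoc, hl]⟩⟩

end Units

section CStarAlgebra

variable {A : Type*} [CStarAlgebra A]

lemma norm_le_one_of_mem_unitary {u : A} (hu : u ∈ unitary A) : ‖u‖ ≤ 1 := by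
  nontriviality A
  exact (CStarRing.norm_of_mem_unitary hu).le

lemma norm_mul_sub_mul_le_of_mem_unitary {a b u v : A} (hb : ‖b‖ ≤ 1) (hu : u ∈ unitary A) :
    ‖a * b - u * v‖ ≤ ‖a - u‖ + ‖b - v‖ := by
  calc ‖a * b - u * v‖ = ‖(a - u) * b + u * (b - v)‖ := by noncomm_ring
    _ ≤ ‖a - u‖ * ‖b‖ + ‖b - v‖ := by
        grw [norm_add_le, norm_mul_le, CStarRing.norm_mem_unitary_mul _ hu]
    _ ≤ ‖a - u‖ + ‖b - v‖ := by gcongr; exact mul_le_of_le_one_right (norm_nonneg _) hb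

end CStarAlgebra

section PolarPart

variable {A : Type*} [CStarAlgebra A] [PartialOrder A] [StarOrderedRing A]

lemma norm_one_sub_sqrt_le {a : A} (ha : 0 ≤ a) : ‖1 - sqrt a‖ ≤ ‖1 - a‖ := by
  have hsqrt : 1 - sqrt a = cfc (fun t : ℝ => 1 - √t) a := by
    rw [cfc_sub .., cfc_const_one .., sqrt_eq_real_sqrt a, cfcₙ_eq_cfc]
  have hid : 1 - a = cfc (fun t : ℝ => 1 - t) a := by
    rw [cfc_sub .., cfc_const_one .., cfc_id' ..]
  rw [hsqrt]
  refine norm_cfc_le (norm_nonneg _) fun t ht => ?_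
  have ht₀ : 0 ≤ t := spectrum_nonneg_of_nonneg ha ht
  have hdist : ‖1 - t‖ ≤ ‖1 - a‖ := hid ▸ norm_apply_le_norm_cfc (fun t : ℝ => 1 - t) a ht
  have hfactor : 1 - t = (1 - √t) * (1 + √t) := by
    nth_rw 1 [← Real.mul_self_sqrt ht₀]; ring
  calc ‖1 - √t‖ ≤ ‖1 - √t‖ * ‖1 + √t‖ :=
        le_mul_of_one_le_right (norm_nonneg _) <| by
          rw [Real.norm_of_nonneg (by positivity)]; linarith [Real.sqrt_nonneg t]
    _ = ‖1 - t‖ := by rw [hfactor, norm_mul]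
    _ ≤ ‖1 - a‖ := hdist

/-- `Ring.inverse` is `0` on non-units, so this is the unitary polar factor only for invertible
`d`. -/
noncomputable def polarPart (d : A) : A := d * Ring.inverse (CFC.abs d)

variable {d : A}

lemma isUnit_cfcAbs (hd : IsUnit d) : IsUnit (CFC.abs d) :=
  (isUnit_sqrt_iff _ (star_mul_self_nonneg d)).2 (hd.star.mul hd)

lemma polarPart_mul_cfcAbs (hd : IsUnit d) : polarPart d * CFC.abs d = d := by
  rw [polarPart, mul_assoc, Ring.inverse_mul_cancel _ (isUnit_cfcAbs hd), mul_one]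

lemma star_polarPart_mul_self (hd : IsUnit d) : star (polarPart d) * polarPart d = 1 := by
  have hinv : star (Ring.inverse (CFC.abs d)) = Ring.inverse (CFC.abs d) :=
    (IsSelfAdjoint.of_nonneg (abs_nonneg d)).ringInverse
  calc star (polarPart d) * polarPart d
      = Ring.inverse (CFC.abs d) * (star d * d) * Ring.inverse (CFC.abs d) := by
        rw [polarPart, star_mul, hinv]; noncomm_ring
    _ = 1 := by
        rw [← abs_mul_abs, ← mul_assoc, Ring.inverse_mul_cancel _ (isUnit_cfcAbs hd), one_mul,
          Ring.mul_inverse_cancel _ (isUnit_cfcAbs hd)]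

lemma polarPart_mem_unitary (hd : IsUnit d) : polarPart d ∈ unitary A := by
  have hu : IsUnit (polarPart d) := hd.mul (isUnit_cfcAbs hd).ringInverse
  have hstar := star_polarPart_mul_self hd
  refine Unitary.mem_iff.2 ⟨hstar, ?_⟩
  rw [← hu.unit_spec] at hstar ⊢
  rw [Units.eq_inv_of_mul_eq_one_right hstar, Units.mul_inv]

lemma norm_polarPart_sub_le (hd : IsUnit d) : ‖polarPart d - d‖ ≤ ‖1 - star d * d‖ := by
  calc ‖polarPart d - d‖ = ‖polarPart d * (1 - CFC.abs d)‖ := by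
        rw [mul_sub, mul_one, polarPart_mul_cfcAbs hd]
    _ = ‖1 - CFC.abs d‖ := CStarRing.norm_mem_unitary_mul _ (polarPart_mem_unitary hd)
    _ ≤ ‖1 - star d * d‖ := norm_one_sub_sqrt_le (star_mul_self_nonneg d)

lemma cfcAbs_mul_star_polarPart (hd : IsUnit d) : CFC.abs d * star (polarPart d) = star d := by
  rw [← (IsSelfAdjoint.of_nonneg (abs_nonneg d)).star_eq, ← star_mul, polarPart_mul_cfcAbs hd]

lemma cfcAbs_star (hd : IsUnit d) :
    CFC.abs (star d) = polarPart d * CFC.abs d * star (polarPart d) := by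
  refine sqrt_unique ?_ (star_right_conjugate_nonneg (abs_nonneg d) _)
  calc polarPart d * CFC.abs d * star (polarPart d) * (polarPart d * CFC.abs d * star (polarPart d))
      = (polarPart d * CFC.abs d) * (star (polarPart d) * polarPart d) *
          (CFC.abs d * star (polarPart d)) := by noncomm_ring
    _ = star (star d) * star d := by
        rw [star_polarPart_mul_self hd, mul_one, polarPart_mul_cfcAbs hd,
          cfcAbs_mul_star_polarPart hd, star_star]

lemma polarPart_star (hd : IsUnit d) : polarPart (star d) = star (polarPart d) := by
  refine (isUnit_cfcAbs hd.star).mul_right_cancel ?_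
  calc polarPart (star d) * CFC.abs (star d) = star d := polarPart_mul_cfcAbs hd.star
    _ = (star (polarPart d) * polarPart d) * (CFC.abs d * star (polarPart d)) := by
        rw [star_polarPart_mul_self hd, one_mul, cfcAbs_mul_star_polarPart hd]
    _ = star (polarPart d) * CFC.abs (star d) := by rw [cfcAbs_star hd]; noncomm_ring

end PolarPart

section Blocks

variable {H : Type*} [NormedAddCommGroup H] [InnerProductSpace ℂ H]
  (K : Submodule ℂ H) [K.HasOrthogonalProjection]

/-- With respect to `H = K ⊕ Kᗮ`, `compressCompl K T` is the lower right block `D` of `T` and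
`extendCompl K X` is the block diagonal operator `1 ⊕ X`. -/
noncomputable def compressCompl (T : H →L[ℂ] H) : Kᗮ →L[ℂ] Kᗮ :=
  Kᗮ.orthogonalProjectionOnto ∘L T ∘L Kᗮ.subtypeL

noncomputable def extendCompl (X : Kᗮ →L[ℂ] Kᗮ) : H →L[ℂ] H :=
  K.starProjection + Kᗮ.subtypeL ∘L X ∘L Kᗮ.orthogonalProjectionOnto

variable {K}

lemma starProjection_apply_orthogonal {v : H} (hv : v ∈ Kᗮ) : K.starProjection v = 0 :=
  (K.starProjection_apply_eq_zero_iff).2 hv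

lemma orthogonalProjectionOnto_orthogonal_starProjection (u : H) :
    Kᗮ.orthogonalProjectionOnto (K.starProjection u) = 0 :=
  Submodule.orthogonalProjectionOnto_apply_of_mem_orthogonal
    (K.le_orthogonal_orthogonal (K.starProjection_apply_mem u))

lemma compressCompl_one : compressCompl K 1 = 1 := by
  ext v; simp [compressCompl]

lemma compressCompl_sub (S T : H →L[ℂ] H) :
    compressCompl K (S - T) = compressCompl K S - compressCompl K T := by
  ext v; simp [compressCompl]

lemma norm_compressCompl_le (T : H →L[ℂ] H) : ‖compressCompl K T‖ ≤ ‖T‖ :=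
  opNorm_le_bound _ (norm_nonneg T) fun v =>
    (Kᗮ.norm_orthogonalProjectionOnto_apply_le _).trans (T.le_opNorm v)

lemma compressCompl_mul (S T : H →L[ℂ] H) :
    compressCompl K (S * T) =
      compressCompl K S * compressCompl K T + compressCompl K (S * K.starProjection * T) := by
  ext v
  simp [compressCompl, K.starProjection_orthogonal_val]

lemma compressCompl_one_sub_starProjection_mul (T : H →L[ℂ] H) :
    compressCompl K ((1 - K.starProjection) * T) = compressCompl K T := by
  ext v
  simp [compressCompl, orthogonalProjectionOnto_orthogonal_starProjection]

lemma compressCompl_mul_one_sub_starProjection (T : H →L[ℂ] H) :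
    compressCompl K (T * (1 - K.starProjection)) = compressCompl K T := by
  ext v
  simp [compressCompl, starProjection_apply_orthogonal v.2]

lemma norm_compressCompl_mul_sub_le (S T : H →L[ℂ] H) :
    ‖compressCompl K (S * T) - compressCompl K S * compressCompl K T‖ ≤
      ‖(1 - K.starProjection) * (S * K.starProjection)‖ *
        ‖K.starProjection * (T * (1 - K.starProjection))‖ := by
  have hP : K.starProjection * K.starProjection = K.starProjection :=
    K.isIdempotentElem_starProjection
  have hfactor : compressCompl K (S * K.starProjection * T) =
      compressCompl K ((1 - K.starProjection) * (S * K.starProjection) *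
        (K.starProjection * (T * (1 - K.starProjection)))) := by
    rw [← compressCompl_mul_one_sub_starProjection, ← compressCompl_one_sub_starProjection_mul]
    congr 1
    calc (1 - K.starProjection) * (S * K.starProjection * T * (1 - K.starProjection))
        = (1 - K.starProjection) * (S * (K.starProjection * K.starProjection) * T *
            (1 - K.starProjection)) := by rw [hP]
      _ = _ := by noncomm_ring
  rw [compressCompl_mul, add_sub_cancel_left, hfactor]
  exact (norm_compressCompl_le _).trans (norm_mul_le _ _)

lemma extendCompl_mul (X Y : Kᗮ →L[ℂ] Kᗮ) :
    extendCompl K (X * Y) = extendCompl K X * extendCompl K Y := by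
  ext u
  simp [extendCompl, starProjection_apply_orthogonal,
    orthogonalProjectionOnto_orthogonal_starProjection,
    K.starProjection_eq_self_iff.2 (K.starProjection_apply_mem u)]

lemma extendCompl_one : extendCompl K 1 = 1 := by
  ext u
  simp [extendCompl, K.starProjection_orthogonal_val]

lemma extendCompl_apply_of_mem (X : Kᗮ →L[ℂ] Kᗮ) {ξ : H} (hξ : ξ ∈ K) : extendCompl K X ξ = ξ := by
  simp [extendCompl, K.starProjection_eq_self_iff.2 hξ,
    Submodule.orthogonalProjectionOnto_apply_of_mem_orthogonal (K.le_orthogonal_orthogonal hξ)]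

lemma extendCompl_apply_mem_orthogonal (X : Kᗮ →L[ℂ] Kᗮ) {ξ : H} (hξ : ξ ∈ Kᗮ) :
    extendCompl K X ξ ∈ Kᗮ := by
  simp [extendCompl, starProjection_apply_orthogonal hξ]

lemma norm_extendCompl_sub_extendCompl_le (X Y : Kᗮ →L[ℂ] Kᗮ) :
    ‖extendCompl K X - extendCompl K Y‖ ≤ ‖X - Y‖ := by
  refine opNorm_le_bound _ (norm_nonneg (X - Y)) fun u => ?_
  calc ‖(extendCompl K X - extendCompl K Y) u‖ = ‖(X - Y) (Kᗮ.orthogonalProjectionOnto u)‖ := by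
        simp [extendCompl]
    _ ≤ ‖X - Y‖ * ‖u‖ := (X - Y).le_of_opNorm_le le_rfl _ |>.trans
        (by gcongr; exact Kᗮ.norm_orthogonalProjectionOnto_apply_le u)

lemma norm_one_sub_starProjection_mul_le {α : ℝ} (hα : 0 ≤ α) {T : H →L[ℂ] H}
    (hT : ∀ ξ ∈ K, ‖T ξ - ξ‖ ≤ α * ‖ξ‖) :
    ‖(1 - K.starProjection) * (T * K.starProjection)‖ ≤ α := by
  rw [← K.starProjection_orthogonal']
  refine opNorm_le_bound _ hα fun u => ?_
  have hzero : Kᗮ.starProjection (K.starProjection u) = 0 :=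
    K.starProjection_orthogonal_apply_eq_zero (K.starProjection_apply_mem u)
  calc ‖Kᗮ.starProjection (T (K.starProjection u))‖
      = ‖Kᗮ.starProjection (T (K.starProjection u) - K.starProjection u)‖ := by
        rw [map_sub, hzero, sub_zero]
    _ ≤ ‖T (K.starProjection u) - K.starProjection u‖ := Kᗮ.norm_starProjection_apply_le _
    _ ≤ α * ‖K.starProjection u‖ := hT _ (K.starProjection_apply_mem u)
    _ ≤ α * ‖u‖ := by gcongr; exact K.norm_starProjection_apply_le u

lemma norm_sub_one_mul_starProjection_le {α : ℝ} (hα : 0 ≤ α) {T : H →L[ℂ] H}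
    (hT : ∀ ξ ∈ K, ‖T ξ - ξ‖ ≤ α * ‖ξ‖) :
    ‖(T - 1) * K.starProjection‖ ≤ α :=
  opNorm_le_bound _ hα fun u =>
    calc ‖T (K.starProjection u) - K.starProjection u‖ ≤ α * ‖K.starProjection u‖ :=
          hT _ (K.starProjection_apply_mem u)
      _ ≤ α * ‖u‖ := by gcongr; exact K.norm_starProjection_apply_le u

lemma extendCompl_compressCompl (T : H →L[ℂ] H) :
    extendCompl K (compressCompl K T) =
      K.starProjection + (1 - K.starProjection) * T * (1 - K.starProjection) := by
  ext u
  simp [extendCompl, compressCompl, K.starProjection_orthogonal_val]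
  abel

lemma norm_extendCompl_sub_le (X : Kᗮ →L[ℂ] Kᗮ) (T : H →L[ℂ] H) :
    ‖extendCompl K X - T‖ ≤ ‖(T - 1) * K.starProjection‖ + ‖X - compressCompl K T‖ +
      ‖K.starProjection * (T * (1 - K.starProjection))‖ := by
  have hdecomp : extendCompl K X - T = (extendCompl K X - extendCompl K (compressCompl K T)) -
      (T - 1) * K.starProjection - K.starProjection * (T * (1 - K.starProjection)) := by
    rw [extendCompl_compressCompl]; noncomm_ring
  rw [hdecomp]
  refine (norm_sub_le _ _).trans (add_le_add ((norm_sub_le _ _).trans ?_) le_rfl)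
  rw [add_comm]
  exact add_le_add le_rfl (norm_extendCompl_sub_extendCompl_le _ _)

variable [CompleteSpace H]

lemma compressCompl_star (T : H →L[ℂ] H) :
    compressCompl K (star T) = star (compressCompl K T) := by
  simp only [compressCompl, star_eq_adjoint, adjoint_comp, Submodule.adjoint_subtypeL,
    Submodule.adjoint_orthogonalProjectionOnto, comp_assoc]

lemma extendCompl_star (X : Kᗮ →L[ℂ] Kᗮ) :
    extendCompl K (star X) = star (extendCompl K X) := by
  simp only [extendCompl, star_add, (isSelfAdjoint_starProjection K).star_eq, star_eq_adjoint,
    adjoint_comp, Submodule.adjoint_subtypeL, Submodule.adjoint_orthogonalProjectionOnto,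
    comp_assoc]

lemma extendCompl_mem_unitary {X : Kᗮ →L[ℂ] Kᗮ} (hX : X ∈ unitary (Kᗮ →L[ℂ] Kᗮ)) :
    extendCompl K X ∈ unitary (H →L[ℂ] H) := by
  rw [Unitary.mem_iff] at hX ⊢
  simp only [← extendCompl_star, ← extendCompl_mul, hX.1, hX.2, extendCompl_one, and_self]

lemma norm_starProjection_mul_mul_one_sub (T : H →L[ℂ] H) :
    ‖K.starProjection * (T * (1 - K.starProjection))‖ =
      ‖(1 - K.starProjection) * (star T * K.starProjection)‖ := by
  rw [← norm_star]
  simp only [star_mul, star_sub, star_one, (isSelfAdjoint_starProjection K).star_eq, mul_assoc]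

lemma norm_starProjection_mul_mul_one_sub_le {α : ℝ} (hα : 0 ≤ α) {T : H →L[ℂ] H}
    (hT : ∀ ξ ∈ K, ‖star T ξ - ξ‖ ≤ α * ‖ξ‖) :
    ‖K.starProjection * (T * (1 - K.starProjection))‖ ≤ α :=
  (norm_starProjection_mul_mul_one_sub T).trans_le (norm_one_sub_starProjection_mul_le hα hT)

variable {α : ℝ} {T : H →L[ℂ] H}

lemma norm_one_sub_star_compressCompl_mul_self_le (hT : star T * T = 1) (hα : 0 ≤ α)
    (hT' : ∀ ξ ∈ K, ‖star T ξ - ξ‖ ≤ α * ‖ξ‖) :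
    ‖1 - star (compressCompl K T) * compressCompl K T‖ ≤ α ^ 2 := by
  have h := norm_compressCompl_mul_sub_le (K := K) (star T) T
  rw [hT, compressCompl_one, compressCompl_star, ← norm_starProjection_mul_mul_one_sub] at h
  exact h.trans (by rw [sq]; have := norm_starProjection_mul_mul_one_sub_le hα hT'; gcongr)

lemma norm_one_sub_compressCompl_mul_star_le (hT : T * star T = 1) (hα : 0 ≤ α)
    (hT' : ∀ ξ ∈ K, ‖T ξ - ξ‖ ≤ α * ‖ξ‖) :
    ‖1 - compressCompl K T * star (compressCompl K T)‖ ≤ α ^ 2 := by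
  have h := norm_one_sub_star_compressCompl_mul_self_le (K := K) (T := star T)
    (by rwa [star_star]) hα (by rwa [star_star])
  rwa [compressCompl_star, star_star (compressCompl K T)] at h

lemma norm_compressCompl_sub_mul_le {T₁ T₂ : H →L[ℂ] H} (T₁₂ : H →L[ℂ] H) (hα : 0 ≤ α)
    (hK₁ : ∀ ξ ∈ K, ‖T₁ ξ - ξ‖ ≤ α * ‖ξ‖) (hK₂ : ∀ ξ ∈ K, ‖star T₂ ξ - ξ‖ ≤ α * ‖ξ‖) :
    ‖compressCompl K T₁₂ - compressCompl K T₁ * compressCompl K T₂‖ ≤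
      ‖T₁₂ - T₁ * T₂‖ + α ^ 2 := by
  calc ‖compressCompl K T₁₂ - compressCompl K T₁ * compressCompl K T₂‖
      = ‖compressCompl K (T₁₂ - T₁ * T₂) +
          (compressCompl K (T₁ * T₂) - compressCompl K T₁ * compressCompl K T₂)‖ := by
        rw [compressCompl_sub, sub_add_sub_cancel]
    _ ≤ ‖T₁₂ - T₁ * T₂‖ + ‖(1 - K.starProjection) * (T₁ * K.starProjection)‖ *
          ‖K.starProjection * (T₂ * (1 - K.starProjection))‖ :=
        norm_add_le_of_le (E := Kᗮ →L[ℂ] Kᗮ) (norm_compressCompl_le _)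
          (norm_compressCompl_mul_sub_le _ _)
    _ ≤ ‖T₁₂ - T₁ * T₂‖ + α ^ 2 := by
        rw [sq]
        gcongr
        · exact norm_one_sub_starProjection_mul_le hα hK₁
        · exact norm_starProjection_mul_mul_one_sub_le hα hK₂

lemma isUnit_compressCompl (hT : T ∈ unitary (H →L[ℂ] H)) (hα : 0 ≤ α) (hα₁ : α < 1)
    (hK : ∀ ξ ∈ K, ‖T ξ - ξ‖ ≤ α * ‖ξ‖) (hK' : ∀ ξ ∈ K, ‖star T ξ - ξ‖ ≤ α * ‖ξ‖) :
    IsUnit (compressCompl K T) := by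
  have hα2 : α ^ 2 < 1 := pow_lt_one₀ hα hα₁ two_ne_zero
  exact isUnit_of_norm_one_sub_star_mul_self_lt (d := compressCompl K T)
    ((norm_one_sub_star_compressCompl_mul_self_le (Unitary.star_mul_self_of_mem hT) hα
      hK').trans_lt hα2)
    ((norm_one_sub_compressCompl_mul_star_le (Unitary.mul_star_self_of_mem hT) hα hK).trans_lt hα2)

lemma norm_polarPart_compressCompl_sub_le (hT : T ∈ unitary (H →L[ℂ] H)) (hα : 0 ≤ α)
    (hα₁ : α < 1) (hK : ∀ ξ ∈ K, ‖T ξ - ξ‖ ≤ α * ‖ξ‖) (hK' : ∀ ξ ∈ K, ‖star T ξ - ξ‖ ≤ α * ‖ξ‖) :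
    ‖polarPart (compressCompl K T) - compressCompl K T‖ ≤ α ^ 2 :=
  (norm_polarPart_sub_le (isUnit_compressCompl hT hα hα₁ hK hK')).trans
    (norm_one_sub_star_compressCompl_mul_self_le (Unitary.star_mul_self_of_mem hT) hα hK')

lemma norm_extendCompl_polarPart_compressCompl_sub_le (hT : T ∈ unitary (H →L[ℂ] H))
    (hα : 0 ≤ α) (hα₁ : α < 1) (hK : ∀ ξ ∈ K, ‖T ξ - ξ‖ ≤ α * ‖ξ‖)
    (hK' : ∀ ξ ∈ K, ‖star T ξ - ξ‖ ≤ α * ‖ξ‖) :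
    ‖extendCompl K (polarPart (compressCompl K T)) - T‖ ≤ 3 * α := by
  refine (norm_extendCompl_sub_le _ T).trans ?_
  have h₁ := norm_sub_one_mul_starProjection_le hα hK
  have h₂ := norm_polarPart_compressCompl_sub_le hT hα hα₁ hK hK'
  have h₃ := norm_starProjection_mul_mul_one_sub_le hα hK'
  nlinarith

lemma exists_mem_unitary_norm_sub_compressCompl_le (hT : T ∈ unitary (H →L[ℂ] H)) (hα : 0 ≤ α)
    (hK : ∀ ξ ∈ K, ‖T ξ - ξ‖ ≤ α * ‖ξ‖) (hK' : ∀ ξ ∈ K, ‖star T ξ - ξ‖ ≤ α * ‖ξ‖) :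
    ∃ D ∈ unitary (Kᗮ →L[ℂ] Kᗮ), ‖D - compressCompl K T‖ ≤ 2 * α := by
  rcases lt_or_ge α 1 with hα₁ | hα₁
  · refine ⟨polarPart (compressCompl K T),
      polarPart_mem_unitary (isUnit_compressCompl hT hα hα₁ hK hK'), ?_⟩
    have := norm_polarPart_compressCompl_sub_le hT hα hα₁ hK hK'
    nlinarith
  · refine ⟨1, one_mem _, (norm_sub_le (1 : Kᗮ →L[ℂ] Kᗮ) _).trans ?_⟩
    have h₁ : ‖(1 : Kᗮ →L[ℂ] Kᗮ)‖ ≤ 1 := norm_id_le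
    have h₂ := (norm_compressCompl_le (K := K) T).trans (norm_le_one_of_mem_unitary hT)
    linarith

end Blocks

section AlmostRep

variable {G : Type*} [Group G] {H : Type*} [NormedAddCommGroup H] [InnerProductSpace ℂ H]
  [CompleteSpace H] {S : Finset G} {ε α : ℝ} {π : G → H →L[ℂ] H}

variable (K : Submodule ℂ H)

lemma IsAlmostRep.norm_star_apply_sub_le (hπ : IsAlmostRep S ε π) (hsym : ∀ s ∈ S, s⁻¹ ∈ S)
    (hinv : ∀ s ∈ S, ∀ ξ ∈ K, ‖π s ξ - ξ‖ ≤ α * ‖ξ‖) :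
    ∀ s ∈ S, ∀ ξ ∈ K, ‖star (π s) ξ - ξ‖ ≤ α * ‖ξ‖ := fun s hs =>
  hπ.2.1 s hs ▸ hinv _ (hsym s hs)

variable [K.HasOrthogonalProjection]

lemma IsAlmostRep.extendCompl_polarPart (hπ : IsAlmostRep S ε π) (hsym : ∀ s ∈ S, s⁻¹ ∈ S)
    (hα : 0 ≤ α) (hα₁ : α < 1) (hinv : ∀ s ∈ S, ∀ ξ ∈ K, ‖π s ξ - ξ‖ ≤ α * ‖ξ‖) :
    IsAlmostRep S (ε + 4 * α) fun t => extendCompl K (polarPart (compressCompl K (π t))) := by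
  have hinv' := hπ.norm_star_apply_sub_le K hsym hinv
  obtain ⟨huni, hstar, hmul⟩ := hπ
  have hunit : ∀ s ∈ S, IsUnit (compressCompl K (π s)) := fun s hs =>
    isUnit_compressCompl (huni s hs) hα hα₁ (hinv s hs) (hinv' s hs)
  have hclose : ∀ s ∈ S, ‖compressCompl K (π s) - polarPart (compressCompl K (π s))‖ ≤ α ^ 2 :=
    fun s hs => by
      rw [norm_sub_rev (compressCompl K (π s))]
      exact norm_polarPart_compressCompl_sub_le (huni s hs) hα hα₁ (hinv s hs) (hinv' s hs)
  refine ⟨fun s hs => extendCompl_mem_unitary (polarPart_mem_unitary (hunit s hs)),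
    fun s hs => ?_, fun s₁ h₁ s₂ h₂ h₁₂ => ?_⟩
  · dsimp only
    rw [hstar s hs, compressCompl_star, polarPart_star (hunit s hs), extendCompl_star]
  have hcompress : ‖compressCompl K (π (s₁ * s₂)) -
      compressCompl K (π s₁) * compressCompl K (π s₂)‖ ≤ ε + α ^ 2 :=
    (norm_compressCompl_sub_mul_le _ hα (hinv s₁ h₁) (hinv' s₂ h₂)).trans
      (add_le_add_left (hmul s₁ h₁ s₂ h₂ h₁₂) _)
  have hpolar : ‖compressCompl K (π s₁) * compressCompl K (π s₂) -
      polarPart (compressCompl K (π s₁)) * polarPart (compressCompl K (π s₂))‖ ≤ 2 * α ^ 2 := by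
    have hD₂ : ‖compressCompl K (π s₂)‖ ≤ 1 :=
      (norm_compressCompl_le _).trans (norm_le_one_of_mem_unitary (huni s₂ h₂))
    have := norm_mul_sub_mul_le_of_mem_unitary (a := compressCompl K (π s₁))
      (v := polarPart (compressCompl K (π s₂))) hD₂ (polarPart_mem_unitary (hunit s₁ h₁))
    linarith [hclose s₁ h₁, hclose s₂ h₂]
  dsimp only
  rw [← ContinuousLinearMap.mul_def, ← extendCompl_mul]
  refine (norm_extendCompl_sub_extendCompl_le _ _).trans ?_
  have htri₁ := norm_sub_le_norm_sub_add_norm_sub (polarPart (compressCompl K (π (s₁ * s₂))))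
    (compressCompl K (π (s₁ * s₂)))
    (polarPart (compressCompl K (π s₁)) * polarPart (compressCompl K (π s₂)))
  have htri₂ := norm_sub_le_norm_sub_add_norm_sub (compressCompl K (π (s₁ * s₂)))
    (compressCompl K (π s₁) * compressCompl K (π s₂))
    (polarPart (compressCompl K (π s₁)) * polarPart (compressCompl K (π s₂)))
  have hclose₁₂ := hclose _ h₁₂
  rw [norm_sub_rev (compressCompl K (π (s₁ * s₂)))] at hclose₁₂
  nlinarith

lemma IsAlmostRep.exists_perturbation (hπ : IsAlmostRep S ε π) (hsym : ∀ s ∈ S, s⁻¹ ∈ S)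
    (hα : 0 ≤ α) (hinv : ∀ s ∈ S, ∀ ξ ∈ K, ‖π s ξ - ξ‖ ≤ α * ‖ξ‖) :
    ∃ π' : G → H →L[ℂ] H, (∀ s ∈ S, π' s ∈ unitary (H →L[ℂ] H)) ∧
      (∀ s ∈ S, ∀ ξ ∈ K, π' s ξ = ξ) ∧ (∀ s ∈ S, ∀ ξ ∈ Kᗮ, π' s ξ ∈ Kᗮ) ∧
      (∀ s ∈ S, ‖π' s - π s‖ ≤ 3 * α) ∧ IsAlmostRep S (ε + 4 * α) π' := by
  rcases lt_or_ge α 1 with hα₁ | hα₁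
  · have hrep := hπ.extendCompl_polarPart K hsym hα hα₁ hinv
    have hinv' := hπ.norm_star_apply_sub_le K hsym hinv
    exact ⟨_, hrep.1, fun s _ ξ hξ => extendCompl_apply_of_mem _ hξ,
      fun s _ ξ hξ => extendCompl_apply_mem_orthogonal _ hξ, fun s hs =>
        norm_extendCompl_polarPart_compressCompl_sub_le (hπ.1 s hs) hα hα₁ (hinv s hs) (hinv' s hs),
      hrep⟩
  refine ⟨fun _ => 1, fun _ _ => one_mem _, fun _ _ _ _ => rfl, fun _ _ _ hξ => hξ, fun s hs => ?_,
    fun _ _ => one_mem _, fun _ _ => (star_one _).symm, fun s₁ h₁ s₂ h₂ h₁₂ => ?_⟩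
  · have h₁ : ‖(1 : H →L[ℂ] H)‖ ≤ 1 := norm_id_le
    have h₂ := norm_le_one_of_mem_unitary (hπ.1 s hs)
    linarith [norm_sub_le (1 : H →L[ℂ] H) (π s)]
  · have hε := (norm_nonneg _).trans (hπ.2.2 s₁ h₁ s₂ h₂ h₁₂)
    change ‖(1 : H →L[ℂ] H) - 1 * 1‖ ≤ ε + 4 * α
    rw [mul_one, sub_self, norm_zero]
    linarith

end AlmostRep

theorem stmt17_general {G : Type*} [Group G]
    {H : Type*} [NormedAddCommGroup H] [InnerProductSpace ℂ H] [CompleteSpace H]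
    (S : Finset G) (hsym : ∀ s ∈ S, s⁻¹ ∈ S)
    (ε α : ℝ) (hα : 0 ≤ α)
    (π : G → H →L[ℂ] H) (hπ : IsAlmostRep S ε π)
    (K : Submodule ℂ H) [CompleteSpace K]
    (hinv : ∀ s ∈ S, ∀ ξ ∈ K, ‖π s ξ - ξ‖ ≤ α * ‖ξ‖) :
    (∀ s ∈ S,
      ‖(K.subtypeL.comp (Submodule.orthogonalProjectionOnto K)).comp
          ((π s).comp (1 - K.subtypeL.comp (Submodule.orthogonalProjectionOnto K)))‖ ≤ S.card * α ∧
      ‖(1 - K.subtypeL.comp (Submodule.orthogonalProjectionOnto K)).comp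
          ((π s).comp (K.subtypeL.comp (Submodule.orthogonalProjectionOnto K)))‖ ≤ S.card * α ∧
      ∃ D' : Kᗮ →L[ℂ] Kᗮ, D' ∈ unitary (Kᗮ →L[ℂ] Kᗮ) ∧
        ‖D' - (Submodule.orthogonalProjectionOnto Kᗮ).comp ((π s).comp Kᗮ.subtypeL)‖
          ≤ 2 * S.card * α) ∧
    ∃ π' : G → H →L[ℂ] H,
      (∀ s ∈ S, π' s ∈ unitary (H →L[ℂ] H)) ∧
      (∀ s ∈ S, ∀ ξ ∈ K, π' s ξ = ξ) ∧
      (∀ s ∈ S, ∀ ξ ∈ Kᗮ, π' s ξ ∈ Kᗮ) ∧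
      (∀ s ∈ S, ‖π' s - π s‖ ≤ 3 * S.card * α) ∧
      IsAlmostRep S (ε + 6 * S.card * α) π' := by
  have hinv' := hπ.norm_star_apply_sub_le K hsym hinv
  have hα_le : ∀ s ∈ S, α ≤ S.card * α := fun s hs =>
    le_mul_of_one_le_left hα (by exact_mod_cast card_pos.2 ⟨s, hs⟩)
  refine ⟨fun s hs => ⟨?_, ?_, ?_⟩, ?_⟩
  · exact (norm_starProjection_mul_mul_one_sub_le hα (hinv' s hs)).trans (hα_le s hs)
  · exact (norm_one_sub_starProjection_mul_le hα (hinv s hs)).trans (hα_le s hs)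
  · obtain ⟨D', hD', hdist⟩ :=
      exists_mem_unitary_norm_sub_compressCompl_le (hπ.1 s hs) hα (hinv s hs) (hinv' s hs)
    exact ⟨D', hD', hdist.trans (by linarith [hα_le s hs])⟩
  obtain ⟨π', huni, hfix, hperp, hdist, hrep⟩ := hπ.exists_perturbation K hsym hα hinv
  refine ⟨π', huni, hfix, hperp, fun s hs => (hdist s hs).trans (by linarith [hα_le s hs]),
    hrep.1, hrep.2.1, fun s₁ h₁ s₂ h₂ h₁₂ => (hrep.2.2 s₁ h₁ s₂ h₂ h₁₂).trans ?_⟩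
  linarith [hα_le s₁ h₁]

/-- Block-perturbation: if `H₀ = K` is the range of a spectral projection of
`A = (1/|S|)∑_{s∈S}π(s)` consisting of `α`-almost-invariant vectors, then writing
`π(s) = (A B; C D)` with respect to `H = K ⊕ Kᗮ` one has `‖B‖, ‖C‖ ≤ |S|α`, there is a
unitary `D'` on `Kᗮ` with `‖D' − D‖ ≤ 2|S|α`, and `π'(s) = (1 0; 0 D')` satisfies
`‖π'(s) − π(s)‖ ≤ 3|S|α` and is an `(ε + 6|S|α)`-almost representation. -/
theorem stmt17 {G : Type*} [Group G] [DecidableEq G]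
    {H : Type*} [NormedAddCommGroup H] [InnerProductSpace ℂ H] [CompleteSpace H]
    (S : Finset G) (hsym : ∀ s ∈ S, s⁻¹ ∈ S) (hone : (1 : G) ∉ S)
    (ε α : ℝ) (hε : 0 ≤ ε) (hα : 0 ≤ α)
    (π : G → H →L[ℂ] H) (hπ : IsAlmostRep S ε π)
    (K : Submodule ℂ H) [CompleteSpace K]
    (P₀ : H →L[ℂ] H) (hP₀sa : IsSelfAdjoint P₀) (hP₀idem : P₀.comp P₀ = P₀)
    (hP₀comm : ∀ u : H,
      P₀ ((((S.card : ℂ))⁻¹ • ∑ s ∈ S, π s) u) = (((S.card : ℂ))⁻¹ • ∑ s ∈ S, π s) (P₀ u))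
    (hK : K = LinearMap.range (P₀ : H →ₗ[ℂ] H))
    (hinv : ∀ s ∈ S, ∀ ξ ∈ K, ‖π s ξ - ξ‖ ≤ α * ‖ξ‖) :
    (∀ s ∈ S,
      ‖(K.subtypeL.comp (Submodule.orthogonalProjectionOnto K)).comp
          ((π s).comp (1 - K.subtypeL.comp (Submodule.orthogonalProjectionOnto K)))‖ ≤ S.card * α ∧
      ‖(1 - K.subtypeL.comp (Submodule.orthogonalProjectionOnto K)).comp
          ((π s).comp (K.subtypeL.comp (Submodule.orthogonalProjectionOnto K)))‖ ≤ S.card * α ∧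
      ∃ D' : Kᗮ →L[ℂ] Kᗮ, D' ∈ unitary (Kᗮ →L[ℂ] Kᗮ) ∧
        ‖D' - (Submodule.orthogonalProjectionOnto Kᗮ).comp ((π s).comp Kᗮ.subtypeL)‖
          ≤ 2 * S.card * α) ∧
    ∃ π' : G → H →L[ℂ] H,
      (∀ s ∈ S, π' s ∈ unitary (H →L[ℂ] H)) ∧
      (∀ s ∈ S, ∀ ξ ∈ K, π' s ξ = ξ) ∧
      (∀ s ∈ S, ∀ ξ ∈ Kᗮ, π' s ξ ∈ Kᗮ) ∧
      (∀ s ∈ S, ‖π' s - π s‖ ≤ 3 * S.card * α) ∧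
      IsAlmostRep S (ε + 6 * S.card * α) π' :=
  stmt17_general S hsym ε α hα π hπ K hinv
end
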